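/- Let d be a positive integer, T > 0, c > 0, C > 0, C̄ > 0 and γ ∈ (0,1]. Let H and p̃ be measurable kernels on ([0,T]×ℝ^d) × ([0,T]×ℝ^d) such that for all 0 ≤ s' < s ≤ T and y', y ∈ ℝ^d: |H(s',y';s,y)| ≤ C (s-s')^{γ/2-1} p̂_c(s',y';s,y) and |p̃(s',y';s,y)| ≤ C̄ p̂_c(s',y';s,y). Define the iterated kernels H^{⊗1} = H and H^{⊗(k+1)}(s',y';s,y) = ∫_{s'}^s ∫_{ℝ^d} H^{⊗k}(r,u;s,y) H(s',y';r,u) du dr. Then for all 0 ≤ s' < s ≤ T and y', y ∈ ℝ^d, the series ∑_{k=1}^∞ ∫_{s'}^s ∫_{ℝ^d} |H^{⊗k}(r,u;s,y)| · |p̃(s',y';r,u)| du dr converges, and there exists a constant C' > 0, depending only on d, c, C, C̄, γ and T, such that |p̃(s',y';s,y) + ∑_{k=1}^∞ ∫_{s'}^s ∫_{ℝ^d} H^{⊗k}(r,u;s,y) p̃(s',y';r,u) du dr| ≤ C' p̂_c(s',y';s,y). -/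

import Mathlib

/-!
Write `K = c (π/c)^{d/2}`. Completing the square gives the Chapman–Kolmogorov identity
`∫ p̂_c(r,u;s,y) p̂_c(s',y';r,u) du = K p̂_c(s',y';s,y)`, and the substitution
`r = s' + (s - s') t` turns the remaining time integral into a Beta integral. Hence convolving
kernels bounded by `a (s-r)^{α-1} p̂_c` and `b (r-s')^{β-1} p̂_c` yields a kernel bounded by
`a b K B(β,α) (s-s')^{α+β-1} p̂_c`. By induction `|H^{⊗(k+1)}| ≤ A_k (s-s')^{(k+1)γ/2-1} p̂_c`
with `A_{k+1} = A_k C K B(γ/2, (k+1)γ/2)`. Since `B(γ/2, α) → 0` as `α → ∞` (dominated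
convergence), the series `∑ A_k T^{(k+1)γ/2}` converges by the ratio test, and it dominates the
parametrix series.
-/

open MeasureTheory

/-- The Gaussian-type kernel `p̂_c(t,x;s,y) = c (s-t)^{-d/2} exp(-c|y-x|²/(s-t))`. -/
noncomputable def phat (d : ℕ) (c t s : ℝ) (x y : EuclideanSpace ℝ (Fin d)) : ℝ :=
  c * (s - t) ^ (-(d : ℝ) / 2) * Real.exp (-c * ‖y - x‖ ^ 2 / (s - t))

open Real Filter Set Topology

section Gaussian

variable {V : Type*} [NormedAddCommGroup V] [InnerProductSpace ℝ V]

lemma mul_norm_sub_sq_add_mul_norm_sub_sq {a b : ℝ} (hab : a + b ≠ 0) (x u z : V) :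
    a * ‖x - u‖ ^ 2 + b * ‖u - z‖ ^ 2 =
      (a + b) * ‖u - (a + b)⁻¹ • (a • x + b • z)‖ ^ 2 + a * b / (a + b) * ‖x - z‖ ^ 2 := by
  have hcentre : u - (a + b)⁻¹ • (a • x + b • z) = (a + b)⁻¹ • (b • (u - z) - a • (x - u)) := by
    rw [eq_inv_smul_iff₀ hab, smul_sub, smul_smul, mul_inv_cancel₀ hab, one_smul]
    module
  rw [hcentre, show x - z = (x - u) + (u - z) by abel]
  generalize x - u = p, u - z = q
  rw [norm_smul, mul_pow, norm_sub_sq_real, norm_add_sq_real, norm_smul, norm_smul,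
    inner_smul_left, inner_smul_right]
  simp only [Real.norm_eq_abs, mul_pow, sq_abs, RCLike.conj_to_real]
  rw [real_inner_comm q p]
  field_simp
  ring

variable [FiniteDimensional ℝ V] [MeasurableSpace V] [BorelSpace V]

lemma integral_exp_neg_mul_norm_sub_sq_mul {a b : ℝ} (hab : 0 < a + b) (x z : V) :
    ∫ u, exp (-a * ‖x - u‖ ^ 2) * exp (-b * ‖u - z‖ ^ 2) =
      (π / (a + b)) ^ (Module.finrank ℝ V / 2 : ℝ) * exp (-(a * b / (a + b)) * ‖x - z‖ ^ 2) := by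
  simp_rw [← exp_add, neg_mul, ← neg_add, mul_norm_sub_sq_add_mul_norm_sub_sq hab.ne', neg_add,
    exp_add, ← neg_mul]
  rw [integral_mul_const, integral_sub_right_eq_self (fun u => exp (-(a + b) * ‖u‖ ^ 2)),
    GaussianFourier.integral_rexp_neg_mul_sq_norm hab]

end Gaussian

lemma summable_prod_range_of_tendsto_zero {R : Type*} [NormedCommRing R] [CompleteSpace R]
    {q : ℕ → R} (hq : Tendsto q atTop (𝓝 0)) :
    Summable fun k => ∏ j ∈ Finset.range k, q j := by
  refine summable_of_ratio_norm_eventually_le (by norm_num : (1 / 2 : ℝ) < 1) ?_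
  filter_upwards [hq.eventually (Metric.closedBall_mem_nhds 0 (by norm_num : (0 : ℝ) < 1 / 2))]
    with k hk
  rw [Finset.prod_range_succ, mul_comm]
  exact (norm_mul_le _ _).trans
    (mul_le_mul_of_nonneg_right (mem_closedBall_zero_iff.1 hk) (norm_nonneg _))

namespace Real

noncomputable def betaIntegral (a b : ℝ) : ℝ := ∫ t in (0 : ℝ)..1, t ^ (a - 1) * (1 - t) ^ (b - 1)

lemma intervalIntegrable_betaIntegrand {a b : ℝ} (ha : 0 < a) (hb : 0 < b) :
    IntervalIntegrable (fun t : ℝ => t ^ (a - 1) * (1 - t) ^ (b - 1)) volume 0 1 := by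
  refine (Complex.betaIntegral_convergent (u := a) (v := b) (by simpa) (by simpa)).norm.congr_uIoo
    fun t ht => ?_
  rw [uIoo_of_le zero_le_one] at ht
  have h1 : (1 : ℂ) - t = ((1 - t : ℝ) : ℂ) := by push_cast; ring
  simp only [norm_mul, h1, Complex.norm_cpow_eq_rpow_re_of_pos ht.1,
    Complex.norm_cpow_eq_rpow_re_of_pos (sub_pos.2 ht.2)]
  simp

lemma betaIntegral_pos {a b : ℝ} (ha : 0 < a) (hb : 0 < b) : 0 < betaIntegral a b :=
  intervalIntegral.intervalIntegral_pos_of_pos_on (intervalIntegrable_betaIntegrand ha hb)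
    (fun _ ht => mul_pos (rpow_pos_of_pos ht.1 _) (rpow_pos_of_pos (sub_pos.2 ht.2) _))
    zero_lt_one

lemma betaIntegral_one_left {b : ℝ} (hb : 0 < b) : betaIntegral 1 b = 1 / b := by
  simp only [betaIntegral, sub_self, rpow_zero, one_mul]
  rw [intervalIntegral.integral_comp_sub_left (fun t => t ^ (b - 1)), sub_self, sub_zero,
    integral_rpow (Or.inl (by linarith)), sub_add_cancel, one_rpow, zero_rpow hb.ne', sub_zero]

lemma tendsto_betaIntegral_atTop {a : ℝ} (ha : 0 < a) :
    Tendsto (betaIntegral a) atTop (𝓝 0) := by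
  rw [show (0 : ℝ) = ∫ t in (0 : ℝ)..1, (0 : ℝ) by simp]
  refine intervalIntegral.tendsto_integral_filter_of_dominated_convergence (fun t => t ^ (a - 1))
    (Eventually.of_forall fun _ => by fun_prop) ?_
    (intervalIntegral.intervalIntegrable_rpow' (by linarith)) ?_
  · filter_upwards [eventually_ge_atTop 1] with b hb
    refine Eventually.of_forall fun t ht => ?_
    rw [uIoc_of_le zero_le_one] at ht
    rw [norm_mul, norm_of_nonneg (rpow_nonneg ht.1.le _),
      norm_of_nonneg (rpow_nonneg (sub_nonneg.2 ht.2) _)]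
    exact mul_le_of_le_one_right (rpow_nonneg ht.1.le _)
      (rpow_le_one (sub_nonneg.2 ht.2) (by linarith [ht.1]) (by linarith))
  · refine Eventually.of_forall fun t ht => ?_
    rw [uIoc_of_le zero_le_one] at ht
    have hlim := (tendsto_rpow_atTop_of_base_lt_one (1 - t) (by linarith [ht.2])
      (by linarith [ht.1])).comp (tendsto_atTop_add_const_right atTop (-1) tendsto_id)
    simpa [sub_eq_add_neg] using hlim.const_mul (t ^ (a - 1))

end Real

open Real

lemma integral_sub_rpow_mul_sub_rpow {s' s : ℝ} (h : s' < s) (a b : ℝ) :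
    ∫ r in s'..s, (r - s') ^ (a - 1) * (s - r) ^ (b - 1) =
      (s - s') ^ (a + b - 1) * betaIntegral a b := by
  have hΔ : 0 < s - s' := sub_pos.2 h
  have key := intervalIntegral.integral_comp_mul_add (a := 0) (b := 1)
    (fun r => (r - s') ^ (a - 1) * (s - r) ^ (b - 1)) hΔ.ne' s'
  have hpt : EqOn
      (fun t => ((s - s') * t + s' - s') ^ (a - 1) * (s - ((s - s') * t + s')) ^ (b - 1))
      (fun t => (s - s') ^ (a + b - 2) * (t ^ (a - 1) * (1 - t) ^ (b - 1))) (uIcc 0 1) := by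
    intro t ht
    rw [uIcc_of_le zero_le_one] at ht
    dsimp only
    rw [show (s - s') * t + s' - s' = (s - s') * t by ring,
      show s - ((s - s') * t + s') = (s - s') * (1 - t) by ring, mul_rpow hΔ.le ht.1,
      mul_rpow hΔ.le (sub_nonneg.2 ht.2), show a + b - 2 = (a - 1) + (b - 1) by ring, rpow_add hΔ]
    ring
  simp only [mul_zero, zero_add, mul_one, sub_add_cancel, smul_eq_mul] at key
  rw [intervalIntegral.integral_congr hpt, intervalIntegral.integral_const_mul] at key
  rw [betaIntegral, show a + b - 1 = (a + b - 2) + 1 by ring, rpow_add_one hΔ.ne', mul_right_comm,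
    key]
  field_simp

lemma intervalIntegrable_sub_rpow_mul_sub_rpow {s' s a b : ℝ} (h : s' < s) (ha : 0 < a)
    (hb : 0 < b) :
    IntervalIntegrable (fun r => (r - s') ^ (a - 1) * (s - r) ^ (b - 1)) volume s' s := by
  refine intervalIntegral.intervalIntegrable_of_integral_ne_zero ?_
  rw [integral_sub_rpow_mul_sub_rpow h]
  exact (mul_pos (rpow_pos_of_pos (sub_pos.2 h) _) (betaIntegral_pos ha hb)).ne'

noncomputable def phatConvConst (d : ℕ) (c : ℝ) : ℝ := c * (π / c) ^ ((d : ℝ) / 2)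

variable {d : ℕ}

lemma phatConvConst_pos {c : ℝ} (hc : 0 < c) : 0 < phatConvConst d c := by
  unfold phatConvConst
  positivity

lemma phat_pos {c t s : ℝ} (hc : 0 < c) (hts : t < s) (x y : EuclideanSpace ℝ (Fin d)) :
    0 < phat d c t s x y := by
  have : 0 < s - t := sub_pos.2 hts
  unfold phat
  positivity

lemma integral_phat_mul_phat {c s' r s : ℝ} (hc : 0 < c) (h₁ : s' < r) (h₂ : r < s)
    (y' y : EuclideanSpace ℝ (Fin d)) :
    ∫ u, phat d c r s u y * phat d c s' r y' u = phatConvConst d c * phat d c s' s y' y := by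
  have hσ : 0 < s - r := sub_pos.2 h₂
  have hτ : 0 < r - s' := sub_pos.2 h₁
  have hΔ : 0 < s - s' := by linarith
  have hsplit : s - s' = (s - r) + (r - s') := by ring
  have hfactor : ∀ u, phat d c r s u y * phat d c s' r y' u =
      (c * (s - r) ^ (-(d : ℝ) / 2) * (c * (r - s') ^ (-(d : ℝ) / 2))) *
        (exp (-(c / (s - r)) * ‖y - u‖ ^ 2) * exp (-(c / (r - s')) * ‖u - y'‖ ^ 2)) := by
    intro u
    simp only [phat, neg_mul, neg_div, div_mul_eq_mul_div]
    ring
  have hrate : c / (s - r) * (c / (r - s')) / (c / (s - r) + c / (r - s')) = c / (s - s') := by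
    rw [hsplit]; field_simp; ring
  have hvar : π / (c / (s - r) + c / (r - s')) = π / c * ((s - r) * (r - s') / (s - s')) := by
    rw [hsplit]; field_simp; ring
  have hpow : (π / c * ((s - r) * (r - s') / (s - s'))) ^ ((d : ℝ) / 2) =
      (π / c) ^ ((d : ℝ) / 2) *
        ((s - r) ^ ((d : ℝ) / 2) * (r - s') ^ ((d : ℝ) / 2) / (s - s') ^ ((d : ℝ) / 2)) := by
    rw [mul_rpow (by positivity) (div_pos (mul_pos hσ hτ) hΔ).le, div_rpow (mul_pos hσ hτ).le hΔ.le,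
      mul_rpow hσ.le hτ.le]
  rw [integral_congr_ae (Eventually.of_forall hfactor), integral_const_mul,
    integral_exp_neg_mul_norm_sub_sq_mul (by positivity), hrate, hvar,
    finrank_euclideanSpace_fin, hpow, phatConvConst, phat, neg_div, rpow_neg hσ.le,
    rpow_neg hτ.le, rpow_neg hΔ.le]
  have : 0 < (s - r) ^ ((d : ℝ) / 2) := by positivity
  have : 0 < (r - s') ^ ((d : ℝ) / 2) := by positivity
  have : 0 < (s - s') ^ ((d : ℝ) / 2) := by positivity
  field_simp

lemma abs_integral_integral_mul_le {c s' s a b α β : ℝ} (hc : 0 < c) (hss : s' < s)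
    (hα : 0 < α) (hβ : 0 < β) {y' y : EuclideanSpace ℝ (Fin d)}
    {F G : ℝ → EuclideanSpace ℝ (Fin d) → ℝ}
    (hF : ∀ r ∈ Ioo s' s, ∀ u, |F r u| ≤ a * (s - r) ^ (α - 1) * phat d c r s u y)
    (hG : ∀ r ∈ Ioo s' s, ∀ u, |G r u| ≤ b * (r - s') ^ (β - 1) * phat d c s' r y' u) :
    |∫ r in s'..s, ∫ u, F r u * G r u| ≤
      a * b * phatConvConst d c * betaIntegral β α * (s - s') ^ (α + β - 1) *
        phat d c s' s y' y := by
  set P := a * b * phatConvConst d c * phat d c s' s y' y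
  have hinner : ∀ r ∈ Ioo s' s,
      ‖∫ u, F r u * G r u‖ ≤ P * ((r - s') ^ (β - 1) * (s - r) ^ (α - 1)) := by
    intro r hr
    have hint : Integrable fun u => phat d c r s u y * phat d c s' r y' u := by
      refine Integrable.of_integral_ne_zero ?_
      rw [integral_phat_mul_phat hc hr.1 hr.2]
      exact (mul_pos (phatConvConst_pos hc) (phat_pos hc hss _ _)).ne'
    calc ‖∫ u, F r u * G r u‖
        ≤ ∫ u, (a * (s - r) ^ (α - 1) * (b * (r - s') ^ (β - 1))) *
            (phat d c r s u y * phat d c s' r y' u) := by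
          refine norm_integral_le_of_norm_le (hint.const_mul _) (Eventually.of_forall fun u => ?_)
          rw [Real.norm_eq_abs, abs_mul]
          refine (mul_le_mul (hF r hr u) (hG r hr u) (abs_nonneg _)
            ((abs_nonneg _).trans (hF r hr u))).trans_eq ?_
          ring
      _ = P * ((r - s') ^ (β - 1) * (s - r) ^ (α - 1)) := by
          rw [integral_const_mul, integral_phat_mul_phat hc hr.1 hr.2]
          ring
  rw [← Real.norm_eq_abs]
  calc ‖∫ r in s'..s, ∫ u, F r u * G r u‖
      ≤ ∫ r in s'..s, P * ((r - s') ^ (β - 1) * (s - r) ^ (α - 1)) := by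
        refine intervalIntegral.norm_integral_le_of_norm_le hss.le ?_
          ((intervalIntegrable_sub_rpow_mul_sub_rpow hss hβ hα).const_mul P)
        filter_upwards [Measure.ae_ne volume s] with r hne hr
        exact hinner r ⟨hr.1, hr.2.lt_of_ne hne⟩
    _ = _ := by
        rw [intervalIntegral.integral_const_mul, integral_sub_rpow_mul_sub_rpow hss, add_comm β α]
        ring

noncomputable def iteratedKernelCoeff (d : ℕ) (c C β : ℝ) (k : ℕ) : ℝ :=
  C * ∏ j ∈ Finset.range k, (C * phatConvConst d c * betaIntegral β ((j + 1) * β))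

lemma iteratedKernelCoeff_nonneg {c C β : ℝ} (hc : 0 < c) (hC : 0 ≤ C) (hβ : 0 < β) (k : ℕ) :
    0 ≤ iteratedKernelCoeff d c C β k :=
  mul_nonneg hC <| Finset.prod_nonneg fun j _ =>
    mul_nonneg (mul_nonneg hC (phatConvConst_pos hc).le) (betaIntegral_pos hβ (by positivity)).le

lemma summable_iteratedKernelCoeff_mul_rpow {c C β T : ℝ} (hβ : 0 < β) (hT : 0 < T) :
    Summable fun k : ℕ => iteratedKernelCoeff d c C β k * T ^ ((k + 1) * β) := by
  have hexp : Tendsto (fun j : ℕ => ((j : ℝ) + 1) * β) atTop atTop :=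
    (tendsto_atTop_add_const_right atTop 1 tendsto_natCast_atTop_atTop).atTop_mul_const hβ
  have hq : Tendsto (fun j : ℕ => C * phatConvConst d c * betaIntegral β ((j + 1) * β) * T ^ β)
      atTop (𝓝 0) := by
    simpa using (((tendsto_betaIntegral_atTop hβ).comp hexp).const_mul
      (C * phatConvConst d c)).mul_const (T ^ β)
  refine ((summable_prod_range_of_tendsto_zero hq).mul_left (C * T ^ β)).congr fun k => ?_
  rw [iteratedKernelCoeff, Finset.prod_mul_distrib, Finset.prod_const, Finset.card_range,
    ← rpow_mul_natCast hT.le, add_mul, one_mul, rpow_add hT, mul_comm (k : ℝ) β]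
  ring

lemma abs_iteratedKernel_le {c T C β : ℝ} (hc : 0 < c) (hβ : 0 < β)
    {H : ℝ → EuclideanSpace ℝ (Fin d) → ℝ → EuclideanSpace ℝ (Fin d) → ℝ}
    {Hk : ℕ → ℝ → EuclideanSpace ℝ (Fin d) → ℝ → EuclideanSpace ℝ (Fin d) → ℝ}
    (hH : ∀ s' s : ℝ, 0 ≤ s' → s' < s → s ≤ T → ∀ y' y : EuclideanSpace ℝ (Fin d),
      |H s' y' s y| ≤ C * (s - s') ^ (β - 1) * phat d c s' s y' y)
    (hHk1 : Hk 1 = H)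
    (hHkrec : ∀ k : ℕ, 1 ≤ k → ∀ (s' s : ℝ) (y' y : EuclideanSpace ℝ (Fin d)),
      Hk (k + 1) s' y' s y = ∫ r in s'..s, ∫ u, Hk k r u s y * H s' y' r u)
    (k : ℕ) {s' s : ℝ} (h0 : 0 ≤ s') (hss : s' < s) (hsT : s ≤ T)
    (y' y : EuclideanSpace ℝ (Fin d)) :
    |Hk (k + 1) s' y' s y| ≤
      iteratedKernelCoeff d c C β k * (s - s') ^ ((k + 1) * β - 1) * phat d c s' s y' y := by
  induction k generalizing s' s y' y with
  | zero => simpa [hHk1, iteratedKernelCoeff] using hH s' s h0 hss hsT y' y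
  | succ k ih =>
    rw [hHkrec (k + 1) le_add_self]
    refine (abs_integral_integral_mul_le hc hss (by positivity) hβ
      (fun r hr u => ih (h0.trans hr.1.le) hr.2 hsT u y)
      (fun r hr u => hH s' r h0 hr.1 (hr.2.le.trans hsT) y' u)).trans_eq ?_
    rw [iteratedKernelCoeff, iteratedKernelCoeff, Finset.prod_range_succ, Nat.cast_succ,
      show ((k : ℝ) + 1) * β + β - 1 = ((k : ℝ) + 1 + 1) * β - 1 by ring]
    ring

lemma abs_integral_integral_mul_le_rpow {c T A Cbar α β s' s : ℝ} (hc : 0 < c) (hA : 0 ≤ A)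
    (hCbar : 0 ≤ Cbar) (hβ : 0 < β) (hβα : β ≤ α) (h0 : 0 ≤ s') (hss : s' < s) (hsT : s ≤ T)
    {y' y : EuclideanSpace ℝ (Fin d)} {F G : ℝ → EuclideanSpace ℝ (Fin d) → ℝ}
    (hF : ∀ r ∈ Ioo s' s, ∀ u, |F r u| ≤ A * (s - r) ^ (α - 1) * phat d c r s u y)
    (hG : ∀ r ∈ Ioo s' s, ∀ u, |G r u| ≤ Cbar * phat d c s' r y' u) :
    |∫ r in s'..s, ∫ u, F r u * G r u| ≤
      Cbar * phatConvConst d c / β * (A * T ^ α) * phat d c s' s y' y := by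
  have hα : 0 < α := hβ.trans_le hβα
  have hG' : ∀ r ∈ Ioo s' s, ∀ u,
      |G r u| ≤ Cbar * (r - s') ^ ((1 : ℝ) - 1) * phat d c s' r y' u := by
    simpa using hG
  refine (abs_integral_integral_mul_le hc hss hα one_pos hF hG').trans ?_
  rw [betaIntegral_one_left hα, add_sub_cancel_right]
  have hK := phatConvConst_pos (d := d) hc
  have hP := phat_pos hc hss y' y
  have hpow : (s - s') ^ α ≤ T ^ α := rpow_le_rpow (by linarith) (by linarith) hα.le
  have hinv : 1 / α ≤ 1 / β := one_div_le_one_div_of_le hβ hβα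
  calc A * Cbar * phatConvConst d c * (1 / α) * (s - s') ^ α * phat d c s' s y' y
      ≤ A * Cbar * phatConvConst d c * (1 / β) * T ^ α * phat d c s' s y' y := by gcongr
    _ = _ := by ring

theorem parametrix_expansion_bound_general (d : ℕ) (T c C Cbar γ : ℝ)
    (hT : 0 < T) (hc : 0 < c) (hC : 0 < C) (hCbar : 0 < Cbar)
    (hγ : γ ∈ Set.Ioc (0:ℝ) 1)
    (H ptil : ℝ → EuclideanSpace ℝ (Fin d) → ℝ → EuclideanSpace ℝ (Fin d) → ℝ)
    (hH : ∀ s' s : ℝ, 0 ≤ s' → s' < s → s ≤ T → ∀ y' y : EuclideanSpace ℝ (Fin d),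
      |H s' y' s y| ≤ C * (s - s') ^ (γ / 2 - 1) * phat d c s' s y' y)
    (hptil : ∀ s' s : ℝ, 0 ≤ s' → s' < s → s ≤ T → ∀ y' y : EuclideanSpace ℝ (Fin d),
      |ptil s' y' s y| ≤ Cbar * phat d c s' s y' y)
    (Hk : ℕ → ℝ → EuclideanSpace ℝ (Fin d) → ℝ → EuclideanSpace ℝ (Fin d) → ℝ)
    (hHk1 : Hk 1 = H)
    (hHkrec : ∀ k : ℕ, 1 ≤ k → ∀ (s' s : ℝ) (y' y : EuclideanSpace ℝ (Fin d)),
      Hk (k + 1) s' y' s y = ∫ r in s'..s, ∫ u, Hk k r u s y * H s' y' r u) :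
    (∀ s' s : ℝ, 0 ≤ s' → s' < s → s ≤ T → ∀ y' y : EuclideanSpace ℝ (Fin d),
      Summable (fun k : ℕ =>
        ∫ r in s'..s, ∫ u, |Hk (k + 1) r u s y| * |ptil s' y' r u|)) ∧
    ∃ C' > (0:ℝ), ∀ s' s : ℝ, 0 ≤ s' → s' < s → s ≤ T →
      ∀ y' y : EuclideanSpace ℝ (Fin d),
        |ptil s' y' s y +
            ∑' k : ℕ, ∫ r in s'..s, ∫ u, Hk (k + 1) r u s y * ptil s' y' r u|
          ≤ C' * phat d c s' s y' y := by
  have hβ : 0 < γ / 2 := half_pos hγ.1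
  set m : ℕ → ℝ := fun k => Cbar * phatConvConst d c / (γ / 2) *
    (iteratedKernelCoeff d c C (γ / 2) k * T ^ ((k + 1) * (γ / 2)))
  have hm : Summable m := (summable_iteratedKernelCoeff_mul_rpow hβ hT).mul_left _
  have hm0 : ∀ k, 0 ≤ m k := fun k =>
    mul_nonneg (div_nonneg (mul_nonneg hCbar.le (phatConvConst_pos hc).le) hβ.le)
      (mul_nonneg (iteratedKernelCoeff_nonneg hc hC.le hβ k) (rpow_nonneg hT.le _))
  -- Stated for any `F`, `G` with the absolute values of the series' integrands, so that it
  -- bounds the terms of the absolute series as well as those of the signed one.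
  have hterm : ∀ (k : ℕ) (s' s : ℝ), 0 ≤ s' → s' < s → s ≤ T →
      ∀ y' y (F G : ℝ → EuclideanSpace ℝ (Fin d) → ℝ),
      (∀ r u, |F r u| = |Hk (k + 1) r u s y|) → (∀ r u, |G r u| = |ptil s' y' r u|) →
      |∫ r in s'..s, ∫ u, F r u * G r u| ≤ m k * phat d c s' s y' y := by
    intro k s' s h0 hss hsT y' y F G hF hG
    refine abs_integral_integral_mul_le_rpow hc (iteratedKernelCoeff_nonneg hc hC.le hβ k)
      hCbar.le hβ (le_mul_of_one_le_left hβ.le (by simp)) h0 hss hsT (fun r hr u => ?_)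
      (fun r hr u => (hG r u).trans_le (hptil s' r h0 hr.1 (hr.2.le.trans hsT) y' u))
    exact (hF r u).trans_le
      (abs_iteratedKernel_le hc hβ hH hHk1 hHkrec k (h0.trans hr.1.le) hr.2 hsT u y)
  refine ⟨fun s' s h0 hss hsT y' y => (hm.mul_right _).of_norm_bounded fun k =>
      hterm k s' s h0 hss hsT y' y _ _ (fun _ _ => abs_abs _) (fun _ _ => abs_abs _),
    Cbar + ∑' k, m k, add_pos_of_pos_of_nonneg hCbar (tsum_nonneg hm0),
    fun s' s h0 hss hsT y' y => ?_⟩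
  calc |ptil s' y' s y + ∑' k, ∫ r in s'..s, ∫ u, Hk (k + 1) r u s y * ptil s' y' r u|
      ≤ |ptil s' y' s y| + ‖∑' k, ∫ r in s'..s, ∫ u, Hk (k + 1) r u s y * ptil s' y' r u‖ :=
        abs_add_le _ _
    _ ≤ Cbar * phat d c s' s y' y + (∑' k, m k) * phat d c s' s y' y :=
        add_le_add (hptil s' s h0 hss hsT y' y) (tsum_of_norm_bounded (hm.hasSum.mul_right _)
          fun k => hterm k s' s h0 hss hsT y' y _ _ (fun _ _ => rfl) (fun _ _ => rfl))
    _ = (Cbar + ∑' k, m k) * phat d c s' s y' y := by ring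

/-- Convergence and Gaussian bound for the parametrix series
`p̃ + ∑_{k≥1} ∫∫ H^{⊗k} p̃`. -/
theorem parametrix_expansion_bound (d : ℕ) (hd : 0 < d) (T c C Cbar γ : ℝ)
    (hT : 0 < T) (hc : 0 < c) (hC : 0 < C) (hCbar : 0 < Cbar)
    (hγ : γ ∈ Set.Ioc (0:ℝ) 1)
    (H ptil : ℝ → EuclideanSpace ℝ (Fin d) → ℝ → EuclideanSpace ℝ (Fin d) → ℝ)
    (hHmeas : Measurable
      (fun p : (ℝ × EuclideanSpace ℝ (Fin d)) × ℝ × EuclideanSpace ℝ (Fin d) =>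
        H p.1.1 p.1.2 p.2.1 p.2.2))
    (hptilmeas : Measurable
      (fun p : (ℝ × EuclideanSpace ℝ (Fin d)) × ℝ × EuclideanSpace ℝ (Fin d) =>
        ptil p.1.1 p.1.2 p.2.1 p.2.2))
    (hH : ∀ s' s : ℝ, 0 ≤ s' → s' < s → s ≤ T → ∀ y' y : EuclideanSpace ℝ (Fin d),
      |H s' y' s y| ≤ C * (s - s') ^ (γ / 2 - 1) * phat d c s' s y' y)
    (hptil : ∀ s' s : ℝ, 0 ≤ s' → s' < s → s ≤ T → ∀ y' y : EuclideanSpace ℝ (Fin d),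
      |ptil s' y' s y| ≤ Cbar * phat d c s' s y' y)
    (Hk : ℕ → ℝ → EuclideanSpace ℝ (Fin d) → ℝ → EuclideanSpace ℝ (Fin d) → ℝ)
    (hHk1 : Hk 1 = H)
    (hHkrec : ∀ k : ℕ, 1 ≤ k → ∀ (s' s : ℝ) (y' y : EuclideanSpace ℝ (Fin d)),
      Hk (k + 1) s' y' s y = ∫ r in s'..s, ∫ u, Hk k r u s y * H s' y' r u) :
    (∀ s' s : ℝ, 0 ≤ s' → s' < s → s ≤ T → ∀ y' y : EuclideanSpace ℝ (Fin d),
      Summable (fun k : ℕ =>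
        ∫ r in s'..s, ∫ u, |Hk (k + 1) r u s y| * |ptil s' y' r u|)) ∧
    ∃ C' > (0:ℝ), ∀ s' s : ℝ, 0 ≤ s' → s' < s → s ≤ T →
      ∀ y' y : EuclideanSpace ℝ (Fin d),
        |ptil s' y' s y +
            ∑' k : ℕ, ∫ r in s'..s, ∫ u, Hk (k + 1) r u s y * ptil s' y' r u|
          ≤ C' * phat d c s' s y' y :=
  parametrix_expansion_bound_general d T c C Cbar γ hT hc hC hCbar hγ H ptil hH hptil Hk hHk1 hHkrec
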